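/- Assume g satisfies conditions (A1)–(A3) on (a,b), let F be the distribution function with density p(y) = c₁ e^{−G(y)} on (a,b), and for z ∈ (a,b) let f_z be the Stein solution defined by f_z(w) = F(w)(1 − F(z))/p(w) for w ≤ z and f_z(w) = F(z)(1 − F(w))/p(w) for w > z. Then |f_z'(w)| ≤ 1 for all w ∈ (a,b) at which f_z is differentiable (i.e. all w ≠ z). -/

import Mathlib

/-! Since `p' = -g p`, for `y ≤ w` one has `∫_y^w g p = p(y) - p(w)`, and comparing
`g(t) ≤ g(w)` under the integral gives `p(y) - p(w) ≤ g(w) (F(w) - F(y))`; letting `y ↓ a`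
yields `-p ≤ g F`, and symmetrically `g (1 - F) ≤ p`. Away from `z` the derivative of `f_z` is
`(1 - F(z)) (p + g F) / p` on the left and `F(z) (g (1 - F) - p) / p` on the right, and these
two inequalities together with `0 ≤ F ≤ 1` and the monotonicity of `F` bound both by `1` in
absolute value. -/

open MeasureTheory Filter Set

/-- The open interval `(a, b) ⊆ ℝ` determined by extended-real endpoints. -/
def strip (a b : EReal) : Set ℝ := {x : ℝ | a < (x : EReal) ∧ (x : EReal) < b}

/-- The density `p(y) = c₁ e^{-G(y)}`, `G(y) = ∫_{w₀}^y g`. -/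
noncomputable def steinPdf (g : ℝ → ℝ) (w₀ c₁ : ℝ) (y : ℝ) : ℝ :=
  c₁ * Real.exp (-(∫ t in w₀..y, g t))

/-- The distribution function `F` with density `p` on `(a, b)`. -/
noncomputable def steinCDF (g : ℝ → ℝ) (a b : EReal) (w₀ c₁ : ℝ) (w : ℝ) : ℝ :=
  ∫ y in strip a b ∩ Set.Iic w, steinPdf g w₀ c₁ y

/-- The Stein solution `f_z`: `f_z(w) = F(w)(1-F(z))/p(w)` for `w ≤ z`, and
`f_z(w) = F(z)(1-F(w))/p(w)` for `w > z`. -/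
noncomputable def steinSol (g : ℝ → ℝ) (a b : EReal) (w₀ c₁ : ℝ) (z w : ℝ) : ℝ :=
  if w ≤ z then steinCDF g a b w₀ c₁ w * (1 - steinCDF g a b w₀ c₁ z) / steinPdf g w₀ c₁ w
  else steinCDF g a b w₀ c₁ z * (1 - steinCDF g a b w₀ c₁ w) / steinPdf g w₀ c₁ w

open Topology

section Calculus

variable {f g p : ℝ → ℝ} {s : Set ℝ} {y w : ℝ}

theorem hasDerivAt_integral_of_continuousOn (hs : IsOpen s) (hs' : s.OrdConnected)
    (hf : ContinuousOn f s) {x₀ x : ℝ} (hx₀ : x₀ ∈ s) (hx : x ∈ s) :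
    HasDerivAt (fun u => ∫ t in x₀..u, f t) (f x) x :=
  intervalIntegral.integral_hasDerivAt_right (hf.mono (hs'.uIcc_subset hx₀ hx)).intervalIntegrable
    (hf.stronglyMeasurableAtFilter hs x hx) (hf.continuousAt (hs.mem_nhds hx))

theorem integral_mul_eq_sub_of_hasDerivAt (hg : ContinuousOn g (uIcc y w))
    (hp : ∀ t ∈ uIcc y w, HasDerivAt p (-(g t) * p t) t) :
    ∫ t in y..w, g t * p t = p y - p w := by
  have hp_cont : ContinuousOn p (uIcc y w) := fun t ht => (hp t ht).continuousAt.continuousWithinAt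
  have hftc := intervalIntegral.integral_eq_sub_of_hasDerivAt hp
    (hg.neg.mul hp_cont).intervalIntegrable
  simp only [neg_mul, intervalIntegral.integral_neg] at hftc
  linarith

theorem sub_le_mul_integral_of_monotoneOn (hyw : y ≤ w) (hg_mono : MonotoneOn g (Icc y w))
    (hg : ContinuousOn g (Icc y w)) (hp_nonneg : ∀ t ∈ Icc y w, 0 ≤ p t)
    (hp : ∀ t ∈ Icc y w, HasDerivAt p (-(g t) * p t) t) :
    p y - p w ≤ g w * ∫ t in y..w, p t := by
  rw [← uIcc_of_le hyw] at hg hp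
  have hp_cont : ContinuousOn p (uIcc y w) := fun t ht => (hp t ht).continuousAt.continuousWithinAt
  rw [← integral_mul_eq_sub_of_hasDerivAt hg hp, ← intervalIntegral.integral_const_mul]
  refine intervalIntegral.integral_mono_on hyw (hg.mul hp_cont).intervalIntegrable
    (continuousOn_const.mul hp_cont).intervalIntegrable fun t ht => ?_
  exact mul_le_mul_of_nonneg_right (hg_mono ht (right_mem_Icc.2 hyw) ht.2) (hp_nonneg t ht)

theorem mul_integral_le_sub_of_monotoneOn (hyw : y ≤ w) (hg_mono : MonotoneOn g (Icc y w))
    (hg : ContinuousOn g (Icc y w)) (hp_nonneg : ∀ t ∈ Icc y w, 0 ≤ p t)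
    (hp : ∀ t ∈ Icc y w, HasDerivAt p (-(g t) * p t) t) :
    g y * ∫ t in y..w, p t ≤ p y - p w := by
  rw [← uIcc_of_le hyw] at hg hp
  have hp_cont : ContinuousOn p (uIcc y w) := fun t ht => (hp t ht).continuousAt.continuousWithinAt
  rw [← integral_mul_eq_sub_of_hasDerivAt hg hp, ← intervalIntegral.integral_const_mul]
  refine intervalIntegral.integral_mono_on hyw (continuousOn_const.mul hp_cont).intervalIntegrable
    (hg.mul hp_cont).intervalIntegrable fun t ht => ?_
  exact mul_le_mul_of_nonneg_right (hg_mono (left_mem_Icc.2 hyw) ht ht.1) (hp_nonneg t ht)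

end Calculus

section IntegralInterIic

variable {f : ℝ → ℝ} {s : Set ℝ}

theorem setIntegral_inter_Iic_sub (hs : s.OrdConnected) (hf : IntegrableOn f s) {y w : ℝ}
    (hy : y ∈ s) (hw : w ∈ s) :
    (∫ t in s ∩ Iic w, f t) - ∫ t in s ∩ Iic y, f t = ∫ t in y..w, f t := by
  wlog hyw : y ≤ w generalizing y w
  · rw [intervalIntegral.integral_symm, ← this hw hy (le_of_not_ge hyw), neg_sub]
  have hIoc : Ioc y w ⊆ s := fun t ht => hs.out hy hw (Ioc_subset_Icc_self ht)
  have hsplit : s ∩ Iic w = (s ∩ Iic y) ∪ Ioc y w := by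
    ext t
    constructor
    · rintro ⟨hts, htw⟩
      exact (le_or_gt t y).imp (fun hty => ⟨hts, hty⟩) fun hyt => ⟨hyt, htw⟩
    · rintro (⟨hts, hty⟩ | ht)
      exacts [⟨hts, hty.trans hyw⟩, ⟨hIoc ht, ht.2⟩]
  have hdisj : Disjoint (s ∩ Iic y) (Ioc y w) :=
    (Iic_disjoint_Ioi le_rfl).mono inter_subset_right Ioc_subset_Ioi_self
  rw [hsplit, setIntegral_union hdisj measurableSet_Ioc (hf.mono_set inter_subset_left)
    (hf.mono_set hIoc), intervalIntegral.integral_of_le hyw, add_sub_cancel_left]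

theorem tendsto_setIntegral_inter_Iic_of_antitone (hs : MeasurableSet s) (hf : IntegrableOn f s)
    {u : ℕ → ℝ} (hu : Antitone u) (hu_lt : ∀ x ∈ s, ∃ n, u n < x) :
    Tendsto (fun n => ∫ t in s ∩ Iic (u n), f t) atTop (𝓝 0) := by
  have hempty : ⋂ n, s ∩ Iic (u n) = ∅ := by
    refine eq_empty_of_forall_notMem fun x hx => ?_
    obtain ⟨n, hn⟩ := hu_lt x (mem_iInter.1 hx 0).1
    exact (mem_iInter.1 hx n).2.not_gt hn
  simpa [hempty] using tendsto_setIntegral_of_antitone (fun n => hs.inter measurableSet_Iic)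
    (fun m n hmn => inter_subset_inter_right _ (Iic_subset_Iic.2 (hu hmn)))
    ⟨0, hf.mono_set inter_subset_left⟩

theorem tendsto_setIntegral_inter_Iic_of_monotone (hs : MeasurableSet s) (hf : IntegrableOn f s)
    {v : ℕ → ℝ} (hv : Monotone v) (hv_ge : ∀ x ∈ s, ∃ n, x ≤ v n) :
    Tendsto (fun n => ∫ t in s ∩ Iic (v n), f t) atTop (𝓝 (∫ t in s, f t)) := by
  have hunion : ⋃ n, s ∩ Iic (v n) = s :=
    Subset.antisymm (iUnion_subset fun _ => inter_subset_left) fun x hx =>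
      let ⟨n, hn⟩ := hv_ge x hx
      mem_iUnion.2 ⟨n, hx, hn⟩
  simpa [hunion] using tendsto_setIntegral_of_monotone (fun n => hs.inter measurableSet_Iic)
    (fun m n hmn => inter_subset_inter_right _ (Iic_subset_Iic.2 (hv hmn))) (by rwa [hunion])

end IntegralInterIic

theorem abs_one_sub_mul_add_div_le_one {P G x y : ℝ} (hP : 0 < P) (hx : 0 ≤ x) (hxy : x ≤ y)
    (hy : y ≤ 1) (h₁ : -P ≤ G * x) (h₂ : G * (1 - x) ≤ P) :
    |(1 - y) * (P + G * x) / P| ≤ 1 := by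
  rw [abs_div, abs_of_pos hP, div_le_one hP, abs_le]
  constructor
  · nlinarith
  · rcases le_or_gt G 0 with hG | hG
    · nlinarith
    · nlinarith [mul_le_mul_of_nonneg_left hxy hG.le]

theorem abs_mul_sub_div_le_one {P G x y : ℝ} (hP : 0 < P) (hy : 0 ≤ y) (hyx : y ≤ x)
    (hx : x ≤ 1) (h₁ : -P ≤ G * x) (h₂ : G * (1 - x) ≤ P) :
    |y * (G * (1 - x) - P) / P| ≤ 1 := by
  rw [abs_div, abs_of_pos hP, div_le_one hP, abs_le]
  constructor
  · rcases le_or_gt 0 G with hG | hG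
    · nlinarith
    · nlinarith [mul_le_mul_of_nonneg_left hyx (neg_nonneg.2 hG.le)]
  · nlinarith

namespace EReal

theorem exists_antitone_seq_real_tendsto {a : EReal} {w : ℝ} (h : a < w) :
    ∃ u : ℕ → ℝ, Antitone u ∧ (∀ n, a < u n ∧ u n < w) ∧
      Tendsto (fun n => (u n : EReal)) atTop (𝓝 a) := by
  obtain ⟨u, hu_anti, hu_mem, hu_lim⟩ := exists_seq_strictAnti_tendsto' h
  have hu_real : ∀ n, ((u n).toReal : EReal) = u n := fun n =>
    coe_toReal (hu_mem n).2.ne_top (hu_mem n).1.ne_bot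
  refine ⟨fun n => (u n).toReal, fun m n hmn => ?_, fun n => ?_, ?_⟩ <;>
    simp only [← EReal.coe_le_coe_iff, ← EReal.coe_lt_coe_iff, hu_real]
  exacts [hu_anti.antitone hmn, hu_mem n, hu_lim]

theorem exists_monotone_seq_real_tendsto {b : EReal} {w : ℝ} (h : (w : EReal) < b) :
    ∃ v : ℕ → ℝ, Monotone v ∧ (∀ n, w < v n ∧ (v n : EReal) < b) ∧
      Tendsto (fun n => (v n : EReal)) atTop (𝓝 b) := by
  obtain ⟨v, hv_mono, hv_mem, hv_lim⟩ := exists_seq_strictMono_tendsto' h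
  have hv_real : ∀ n, ((v n).toReal : EReal) = v n := fun n =>
    coe_toReal (hv_mem n).2.ne_top (hv_mem n).1.ne_bot
  refine ⟨fun n => (v n).toReal, fun m n hmn => ?_, fun n => ?_, ?_⟩ <;>
    simp only [← EReal.coe_le_coe_iff, ← EReal.coe_lt_coe_iff, hv_real]
  exacts [hv_mono.monotone hmn, hv_mem n, hv_lim]

end EReal

theorem isOpen_strip (a b : EReal) : IsOpen (strip a b) :=
  isOpen_Ioo.preimage continuous_coe_real_ereal

theorem ordConnected_strip (a b : EReal) : (strip a b).OrdConnected :=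
  ordConnected_Ioo.preimage_mono fun _ _ => EReal.coe_le_coe_iff.2

section Stein

variable {a b : EReal} {g : ℝ → ℝ} {w₀ c₁ : ℝ}

theorem steinPdf_pos (hc₁ : 0 < c₁) (y : ℝ) : 0 < steinPdf g w₀ c₁ y :=
  mul_pos hc₁ (Real.exp_pos _)

theorem hasDerivAt_steinPdf (hw₀ : w₀ ∈ strip a b) (hg : ContinuousOn g (strip a b))
    {w : ℝ} (hw : w ∈ strip a b) :
    HasDerivAt (steinPdf g w₀ c₁) (-(g w) * steinPdf g w₀ c₁ w) w := by
  have hG := hasDerivAt_integral_of_continuousOn (isOpen_strip a b) (ordConnected_strip a b) hg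
    hw₀ hw
  exact (hG.neg.exp.const_mul c₁).congr_deriv (by simp only [steinPdf, Pi.neg_apply]; ring)

theorem integrableOn_steinPdf (hnorm : ∫ y in strip a b, steinPdf g w₀ c₁ y = 1) :
    IntegrableOn (steinPdf g w₀ c₁) (strip a b) :=
  Integrable.of_integral_ne_zero (by simp [hnorm])

theorem steinCDF_nonneg (hc₁ : 0 < c₁) (w : ℝ) : 0 ≤ steinCDF g a b w₀ c₁ w :=
  setIntegral_nonneg ((isOpen_strip a b).measurableSet.inter measurableSet_Iic)
    fun y _ => (steinPdf_pos hc₁ y).le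

theorem steinCDF_le_one (hc₁ : 0 < c₁) (hnorm : ∫ y in strip a b, steinPdf g w₀ c₁ y = 1)
    (w : ℝ) : steinCDF g a b w₀ c₁ w ≤ 1 :=
  hnorm ▸ setIntegral_mono_set (integrableOn_steinPdf hnorm)
    (.of_forall fun t => (steinPdf_pos hc₁ t).le) inter_subset_left.eventuallyLE

theorem monotone_steinCDF (hc₁ : 0 < c₁) (hp : IntegrableOn (steinPdf g w₀ c₁) (strip a b)) :
    Monotone (steinCDF g a b w₀ c₁) := fun _ _ hyw =>
  setIntegral_mono_set (hp.mono_set inter_subset_left)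
    (.of_forall fun t => (steinPdf_pos hc₁ t).le)
    (inter_subset_inter_right _ (Iic_subset_Iic.2 hyw)).eventuallyLE

theorem hasDerivAt_steinCDF (hw₀ : w₀ ∈ strip a b) (hg : ContinuousOn g (strip a b))
    (hp : IntegrableOn (steinPdf g w₀ c₁) (strip a b)) {w : ℝ} (hw : w ∈ strip a b) :
    HasDerivAt (steinCDF g a b w₀ c₁) (steinPdf g w₀ c₁ w) w := by
  have hp_cont : ContinuousOn (steinPdf g w₀ c₁) (strip a b) := fun t ht =>
    (hasDerivAt_steinPdf hw₀ hg ht).continuousAt.continuousWithinAt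
  refine ((hasDerivAt_integral_of_continuousOn (isOpen_strip a b) (ordConnected_strip a b)
    hp_cont hw₀ hw).const_add (steinCDF g a b w₀ c₁ w₀)).congr_of_eventuallyEq ?_
  filter_upwards [(isOpen_strip a b).mem_nhds hw] with u hu
  rw [← setIntegral_inter_Iic_sub (ordConnected_strip a b) hp hw₀ hu]
  exact (add_sub_cancel _ _).symm

theorem neg_steinPdf_le_mul_steinCDF (hw₀ : w₀ ∈ strip a b) (hc₁ : 0 < c₁)
    (hg : ContinuousOn g (strip a b)) (hg_mono : MonotoneOn g (strip a b))
    (hp : IntegrableOn (steinPdf g w₀ c₁) (strip a b)) {w : ℝ} (hw : w ∈ strip a b) :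
    -steinPdf g w₀ c₁ w ≤ g w * steinCDF g a b w₀ c₁ w := by
  obtain ⟨u, hu_anti, hu_mem, hu_lim⟩ := EReal.exists_antitone_seq_real_tendsto hw.1
  have hF : Tendsto (fun n => steinCDF g a b w₀ c₁ (u n)) atTop (𝓝 0) :=
    tendsto_setIntegral_inter_Iic_of_antitone (isOpen_strip a b).measurableSet hp hu_anti
      fun x hx => (hu_lim.eventually (gt_mem_nhds hx.1)).exists.imp fun _ => EReal.coe_lt_coe_iff.1
  refine le_of_tendsto' (by simpa using (hF.const_mul (g w)).sub_const (steinPdf g w₀ c₁ w))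
    fun n => ?_
  have huw : u n < w := (hu_mem n).2
  have hun : u n ∈ strip a b := ⟨(hu_mem n).1, (EReal.coe_lt_coe_iff.2 huw).trans hw.2⟩
  have hIcc : Icc (u n) w ⊆ strip a b := (ordConnected_strip a b).out hun hw
  have hdiff : steinCDF g a b w₀ c₁ w - steinCDF g a b w₀ c₁ (u n) =
      ∫ t in u n..w, steinPdf g w₀ c₁ t :=
    setIntegral_inter_Iic_sub (ordConnected_strip a b) hp hun hw
  have hcmp := sub_le_mul_integral_of_monotoneOn huw.le (hg_mono.mono hIcc) (hg.mono hIcc)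
    (fun t _ => (steinPdf_pos hc₁ t).le) fun t ht => hasDerivAt_steinPdf hw₀ hg (hIcc ht)
  rw [← hdiff, mul_sub] at hcmp
  linarith [steinPdf_pos hc₁ (u n) (g := g) (w₀ := w₀)]

theorem mul_one_sub_steinCDF_le_steinPdf (hw₀ : w₀ ∈ strip a b) (hc₁ : 0 < c₁)
    (hg : ContinuousOn g (strip a b)) (hg_mono : MonotoneOn g (strip a b))
    (hnorm : ∫ y in strip a b, steinPdf g w₀ c₁ y = 1) {w : ℝ} (hw : w ∈ strip a b) :
    g w * (1 - steinCDF g a b w₀ c₁ w) ≤ steinPdf g w₀ c₁ w := by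
  have hp := integrableOn_steinPdf hnorm
  obtain ⟨v, hv_mono, hv_mem, hv_lim⟩ := EReal.exists_monotone_seq_real_tendsto hw.2
  have hF : Tendsto (fun n => steinCDF g a b w₀ c₁ (v n)) atTop (𝓝 1) :=
    hnorm ▸ tendsto_setIntegral_inter_Iic_of_monotone (isOpen_strip a b).measurableSet hp hv_mono
      fun x hx => (hv_lim.eventually (lt_mem_nhds hx.2)).exists.imp fun _ hn =>
        (EReal.coe_lt_coe_iff.1 hn).le
  refine ge_of_tendsto'
    (by simpa using ((hF.const_sub 1).const_mul (g w)).add_const (steinPdf g w₀ c₁ w)) fun n => ?_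
  have hwv : w < v n := (hv_mem n).1
  have hvn : v n ∈ strip a b := ⟨hw.1.trans (EReal.coe_lt_coe_iff.2 hwv), (hv_mem n).2⟩
  have hIcc : Icc w (v n) ⊆ strip a b := (ordConnected_strip a b).out hw hvn
  have hdiff : steinCDF g a b w₀ c₁ (v n) - steinCDF g a b w₀ c₁ w =
      ∫ t in w..v n, steinPdf g w₀ c₁ t :=
    setIntegral_inter_Iic_sub (ordConnected_strip a b) hp hw hvn
  have hcmp := mul_integral_le_sub_of_monotoneOn hwv.le (hg_mono.mono hIcc) (hg.mono hIcc)
    (fun t _ => (steinPdf_pos hc₁ t).le) fun t ht => hasDerivAt_steinPdf hw₀ hg (hIcc ht)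
  rw [← hdiff, mul_sub] at hcmp
  linarith [steinPdf_pos hc₁ (v n) (g := g) (w₀ := w₀)]

theorem hasDerivAt_steinSol_of_lt (hw₀ : w₀ ∈ strip a b) (hc₁ : 0 < c₁)
    (hg : ContinuousOn g (strip a b)) (hp : IntegrableOn (steinPdf g w₀ c₁) (strip a b))
    {z w : ℝ} (hw : w ∈ strip a b) (hwz : w < z) :
    HasDerivAt (steinSol g a b w₀ c₁ z)
      ((1 - steinCDF g a b w₀ c₁ z) * (steinPdf g w₀ c₁ w + g w * steinCDF g a b w₀ c₁ w) /
        steinPdf g w₀ c₁ w) w := by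
  have hp_pos := steinPdf_pos hc₁ w (g := g) (w₀ := w₀)
  have hquot := ((hasDerivAt_steinCDF hw₀ hg hp hw).mul_const (1 - steinCDF g a b w₀ c₁ z)).div
    (hasDerivAt_steinPdf hw₀ hg hw) hp_pos.ne'
  refine (hquot.congr_deriv ?_).congr_of_eventuallyEq ?_
  · field_simp
    ring
  · filter_upwards [Iio_mem_nhds hwz] with u hu
    simp only [steinSol, if_pos (mem_Iio.1 hu).le, Pi.div_apply]

theorem hasDerivAt_steinSol_of_gt (hw₀ : w₀ ∈ strip a b) (hc₁ : 0 < c₁)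
    (hg : ContinuousOn g (strip a b)) (hp : IntegrableOn (steinPdf g w₀ c₁) (strip a b))
    {z w : ℝ} (hw : w ∈ strip a b) (hzw : z < w) :
    HasDerivAt (steinSol g a b w₀ c₁ z)
      (steinCDF g a b w₀ c₁ z * (g w * (1 - steinCDF g a b w₀ c₁ w) - steinPdf g w₀ c₁ w) /
        steinPdf g w₀ c₁ w) w := by
  have hp_pos := steinPdf_pos hc₁ w (g := g) (w₀ := w₀)
  have hquot := (((hasDerivAt_steinCDF hw₀ hg hp hw).const_sub 1).const_mul
    (steinCDF g a b w₀ c₁ z)).div (hasDerivAt_steinPdf hw₀ hg hw) hp_pos.ne'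
  refine (hquot.congr_deriv ?_).congr_of_eventuallyEq ?_
  · field_simp
    ring
  · filter_upwards [Ioi_mem_nhds hzw] with u hu
    simp only [steinSol, if_neg (not_le.2 (mem_Ioi.1 hu)), Pi.div_apply]

end Stein

theorem steinSol_deriv_le_one_general
    (a b : EReal) (g : ℝ → ℝ) (w₀ c₁ : ℝ)
    (hw₀ : w₀ ∈ strip a b) (hc₁ : 0 < c₁)
    (hnorm : ∫ y in strip a b, steinPdf g w₀ c₁ y = 1)
    -- condition (A1)
    (hg_mono : MonotoneOn g (strip a b))
    -- condition (A2)
    (hg_diff : ∀ w ∈ strip a b, DifferentiableAt ℝ g w)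
    (z : ℝ) :
    ∀ w ∈ strip a b, w ≠ z → |deriv (steinSol g a b w₀ c₁ z) w| ≤ 1 := by
  intro w hw hwz
  have hg : ContinuousOn g (strip a b) := fun x hx =>
    (hg_diff x hx).continuousAt.continuousWithinAt
  have hp := integrableOn_steinPdf hnorm
  have hK₁ := neg_steinPdf_le_mul_steinCDF hw₀ hc₁ hg hg_mono hp hw
  have hK₂ := mul_one_sub_steinCDF_le_steinPdf hw₀ hc₁ hg hg_mono hnorm hw
  rcases hwz.lt_or_gt with hwz | hzw
  · rw [(hasDerivAt_steinSol_of_lt hw₀ hc₁ hg hp hw hwz).deriv]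
    exact abs_one_sub_mul_add_div_le_one (steinPdf_pos hc₁ w) (steinCDF_nonneg hc₁ w)
      (monotone_steinCDF hc₁ hp hwz.le) (steinCDF_le_one hc₁ hnorm z) hK₁ hK₂
  · rw [(hasDerivAt_steinSol_of_gt hw₀ hc₁ hg hp hw hzw).deriv]
    exact abs_mul_sub_div_le_one (steinPdf_pos hc₁ w) (steinCDF_nonneg hc₁ z)
      (monotone_steinCDF hc₁ hp hzw.le) (steinCDF_le_one hc₁ hnorm w) hK₁ hK₂

/-- Lemma 4.1, (4.4): `|f_z'(w)| ≤ 1` wherever `f_z` is differentiable (w ≠ z). -/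
theorem steinSol_deriv_le_one
    (a b : EReal) (hab : a < b) (g : ℝ → ℝ) (w₀ c₁ : ℝ)
    (hw₀ : w₀ ∈ strip a b) (hc₁ : 0 < c₁)
    (hnorm : ∫ y in strip a b, steinPdf g w₀ c₁ y = 1)
    -- condition (A1)
    (hg_mono : MonotoneOn g (strip a b))
    (hg_sign : ∀ w ∈ strip a b, 0 ≤ (w - w₀) * g w)
    -- condition (A2)
    (hg_diff : ∀ w ∈ strip a b, DifferentiableAt ℝ g w)
    (hg'_diff : ∀ w ∈ strip a b, DifferentiableAt ℝ (deriv g) w)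
    (hg'_cont : ContinuousOn (deriv g) (strip a b))
    (hg_ineq : ∀ w ∈ strip a b, 0 ≤ 2 * (deriv g w) ^ 2 - g w * deriv (deriv g) w)
    -- condition (A3)
    (hlim_a : Tendsto (fun y => g y * steinPdf g w₀ c₁ y)
      (Filter.comap (fun x : ℝ => (x : EReal)) (nhdsWithin a (Set.Ioi a))) (nhds 0))
    (hlim_b : Tendsto (fun y => g y * steinPdf g w₀ c₁ y)
      (Filter.comap (fun x : ℝ => (x : EReal)) (nhdsWithin b (Set.Iio b))) (nhds 0))
    (z : ℝ) (hz : z ∈ strip a b) :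
    ∀ w ∈ strip a b, w ≠ z → |deriv (steinSol g a b w₀ c₁ z) w| ≤ 1 :=
  steinSol_deriv_le_one_general a b g w₀ c₁ hw₀ hc₁ hnorm hg_mono hg_diff z
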